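/- Let Γ ∪ {A, F} be a set of PML formulas, X_m a minimal variable, X_i an intuitionistic variable, X_c a classical variable, F_i an intuitionistic formula, and F_c a classical formula. If Γ ⊢_pml A, then Γ[F/X_m] ⊢_pml A[F/X_m], Γ[F_i/X_i] ⊢_pml A[F_i/X_i], and Γ[F_c/X_c] ⊢_pml A[F_c/X_c], where B[F/X] denotes the result of substituting F for each occurrence of the variable X in B. -/

import Mathlib

namespace PML

/-- The three kinds of propositional variables: minimal, intuitionistic, classical. -/
inductive Kind : Type
  | m | i | c
deriving DecidableEq

/-- Formulas of propositional mixed logic (PML). -/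
inductive Formula : Type
  | var : Kind → ℕ → Formula
  | bot : Formula
  | and : Formula → Formula → Formula
  | or : Formula → Formula → Formula
  | imp : Formula → Formula → Formula
deriving DecidableEq

namespace Formula

/-- ¬A abbreviates A → ⊥. -/
def neg (A : Formula) : Formula := imp A bot

/-- All variables occurring in the formula have a kind satisfying `p`. -/
def onlyKinds (p : Kind → Prop) : Formula → Prop
  | var k _ => p k
  | bot => True
  | and A B => onlyKinds p A ∧ onlyKinds p B
  | or A B => onlyKinds p A ∧ onlyKinds p B
  | imp A B => onlyKinds p A ∧ onlyKinds p B

/-- A classical formula: only classical variables. -/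
def IsClassical (A : Formula) : Prop := onlyKinds (fun k => k = Kind.c) A

/-- An intuitionistic formula: only intuitionistic and classical variables. -/
def IsIntuitionistic (A : Formula) : Prop := onlyKinds (fun k => k = Kind.i ∨ k = Kind.c) A

/-- A formula without classical variables. -/
def NoClassicalVar (A : Formula) : Prop := onlyKinds (fun k => k ≠ Kind.c) A

/-- A formula without classical and without intuitionistic variables. -/
def OnlyMinimalVar (A : Formula) : Prop := onlyKinds (fun k => k = Kind.m) A

/-- A formula without intuitionistic variables. -/
def NoIntuitVar (A : Formula) : Prop := onlyKinds (fun k => k ≠ Kind.i) A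

/-- Substitution of the formula `F` for every occurrence of the variable of kind `k`, index `n`. -/
def subst (F : Formula) (k : Kind) (n : ℕ) : Formula → Formula
  | var k' n' => if k' = k ∧ n' = n then F else var k' n'
  | bot => bot
  | and A B => and (subst F k n A) (subst F k n B)
  | or A B => or (subst F k n A) (subst F k n B)
  | imp A B => imp (subst F k n A) (subst F k n B)

end Formula

/-- Which optional rules are available: the intuitionistic absurdity rule (⊥_i),
the classical absurdity rule (⊥_c), and whether (∨_E) is unrestricted
(`fullOrE = false` gives the PML^∨ restriction). -/
structure Rules where
  botI : Bool
  botC : Bool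
  fullOrE : Bool

/-- Natural deduction for mixed logic, parametrized by the available rules. -/
inductive Deriv (R : Rules) : Set Formula → Formula → Prop
  | ax (A : Formula) : Deriv R {A} A
  | weak {Γ : Set Formula} {A : Formula} (B : Formula) : Deriv R Γ A → Deriv R (insert B Γ) A
  | andI {Γ₁ Γ₂ : Set Formula} {A₁ A₂ : Formula} :
      Deriv R Γ₁ A₁ → Deriv R Γ₂ A₂ → Deriv R (Γ₁ ∪ Γ₂) (A₁.and A₂)
  | andE₁ {Γ : Set Formula} {A₁ A₂ : Formula} : Deriv R Γ (A₁.and A₂) → Deriv R Γ A₁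
  | andE₂ {Γ : Set Formula} {A₁ A₂ : Formula} : Deriv R Γ (A₁.and A₂) → Deriv R Γ A₂
  | orI₁ {Γ : Set Formula} {A₁ : Formula} (A₂ : Formula) : Deriv R Γ A₁ → Deriv R Γ (A₁.or A₂)
  | orI₂ {Γ : Set Formula} {A₂ : Formula} (A₁ : Formula) : Deriv R Γ A₂ → Deriv R Γ (A₁.or A₂)
  | orE {Γ₁ Γ₂ Γ₃ : Set Formula} {A₁ A₂ B : Formula} :
      (R.fullOrE = true ∨ ((A₁.or A₂).IsClassical → B.IsClassical)) →
      Deriv R Γ₁ (A₁.or A₂) → Deriv R (insert A₁ Γ₂) B → Deriv R (insert A₂ Γ₃) B →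
      Deriv R (Γ₁ ∪ Γ₂ ∪ Γ₃) B
  | impI {Γ : Set Formula} {A₁ A₂ : Formula} : Deriv R (insert A₁ Γ) A₂ → Deriv R Γ (A₁.imp A₂)
  | impE {Γ₁ Γ₂ : Set Formula} {A₁ A₂ : Formula} :
      Deriv R Γ₁ (A₁.imp A₂) → Deriv R Γ₂ A₁ → Deriv R (Γ₁ ∪ Γ₂) A₂
  | botI {Γ : Set Formula} {A : Formula} :
      R.botI = true → A.IsIntuitionistic → Deriv R Γ Formula.bot → Deriv R Γ A
  | botC {Γ : Set Formula} {A : Formula} :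
      R.botC = true → A.IsClassical → Deriv R Γ (A.neg.neg) → Deriv R Γ A

/-- Γ ⊢_pml A : full mixed logic. -/
def DerivPML : Set Formula → Formula → Prop := Deriv ⟨true, true, true⟩

/-- Γ ⊢_(i) A : derivable without the rule (⊥_c). -/
def DerivI : Set Formula → Formula → Prop := Deriv ⟨true, false, true⟩

/-- Γ ⊢_(m) A : derivable without the rules (⊥_i) and (⊥_c). -/
def DerivM : Set Formula → Formula → Prop := Deriv ⟨false, false, true⟩

/-- Γ ⊢_(i') A : derivable without the rule (⊥_i). -/
def DerivI' : Set Formula → Formula → Prop := Deriv ⟨false, true, true⟩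

/-- Γ ⊢^∨ A : derivable in PML^∨ (restricted ∨-elimination). -/
def DerivVee : Set Formula → Formula → Prop := Deriv ⟨true, true, false⟩

/-- A Kripke frame over a poset `W`: a monotone forcing relation on atoms. -/
structure KripkeFrame (W : Type) [PartialOrder W] where
  fvar : W → Kind → ℕ → Prop
  fbot : W → Prop
  mono_var : ∀ {a b : W} (k : Kind) (n : ℕ), a ≤ b → fvar a k n → fvar b k n
  mono_bot : ∀ {a b : W}, a ≤ b → fbot a → fbot b

variable {W : Type} [PartialOrder W]

/-- Forcing, extended to compound formulas. -/
def KripkeFrame.force (M : KripkeFrame W) : W → Formula → Prop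
  | a, .var k n => M.fvar a k n
  | a, .bot => M.fbot a
  | a, .and A B => M.force a A ∧ M.force a B
  | a, .or A B => M.force a A ∨ M.force a B
  | a, .imp A B => ∀ b : W, a ≤ b → M.force b A → M.force b B

/-- A formula is valid in a model iff it is forced at every node. -/
def KripkeFrame.Valid (M : KripkeFrame W) (A : Formula) : Prop := ∀ a : W, M.force a A

/-- A mixed Kripke model: (2) a node forcing ⊥ forces every intuitionistic or classical
variable; (3) a classical variable forced at a node not forcing ⊥ is forced everywhere. -/
def IsMixed (M : KripkeFrame W) : Prop :=
  (∀ (a : W) (k : Kind) (n : ℕ), M.fbot a → (k = Kind.i ∨ k = Kind.c) → M.fvar a k n) ∧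
  (∀ (a : W) (n : ℕ), M.fvar a Kind.c n → ¬ M.fbot a → ∀ b : W, M.fvar b Kind.c n)

/-- An intuitionistic mixed Kripke model: restricted to atoms in 𝒱_m ∪ 𝒱_i ∪ {⊥}
(no classical atom is forced) and a node forcing ⊥ forces every intuitionistic variable. -/
def IsIntMixed (M : KripkeFrame W) : Prop :=
  (∀ (a : W) (n : ℕ), ¬ M.fvar a Kind.c n) ∧
  (∀ (a : W) (n : ℕ), M.fbot a → M.fvar a Kind.i n)

/-- A minimal mixed Kripke model: restricted to atoms in 𝒱_m ∪ {⊥}. -/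
def IsMinMixed (M : KripkeFrame W) : Prop :=
  (∀ (a : W) (n : ℕ), ¬ M.fvar a Kind.i n) ∧ (∀ (a : W) (n : ℕ), ¬ M.fvar a Kind.c n)

/-- Semantic entailment: every mixed Kripke model validating all of Γ validates A. -/
def Entails (Γ : Set Formula) (A : Formula) : Prop :=
  ∀ (W : Type) [PartialOrder W] [Nonempty W] (M : KripkeFrame W),
    IsMixed M → (∀ B ∈ Γ, M.Valid B) → M.Valid A

/-- A saturated set of formulas. -/
def Saturated (Δ : Set Formula) : Prop :=
  ∀ C D : Formula, DerivPML Δ (C.or D) → C ∈ Δ ∨ D ∈ Δ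

/-- The restriction 𝒦_(i) of a model to atoms in 𝒱_m ∪ 𝒱_i ∪ {⊥}. -/
def KripkeFrame.restrictI (M : KripkeFrame W) : KripkeFrame W where
  fvar a k n := k ≠ Kind.c ∧ M.fvar a k n
  fbot := M.fbot
  mono_var := by
    intro a b k n hab h
    exact ⟨h.1, M.mono_var k n hab h.2⟩
  mono_bot := fun hab h => M.mono_bot hab h

/-- The restriction 𝒦_(m) of a model to atoms in 𝒱_m ∪ {⊥}. -/
def KripkeFrame.restrictM (M : KripkeFrame W) : KripkeFrame W where
  fvar a k n := k = Kind.m ∧ M.fvar a k n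
  fbot := M.fbot
  mono_var := by
    intro a b k n hab h
    exact ⟨h.1, M.mono_var k n hab h.2⟩
  mono_bot := fun hab h => M.mono_bot hab h

/-- The translation ^m : intuitionistic variables X_i are sent to ¬¬ m(X_i). -/
def Formula.transM (m : ℕ → ℕ) : Formula → Formula
  | .var Kind.i n => ((Formula.var Kind.m (m n)).neg).neg
  | .var k n => .var k n
  | .bot => .bot
  | .and A B => .and (Formula.transM m A) (Formula.transM m B)
  | .or A B => .or (Formula.transM m A) (Formula.transM m B)
  | .imp A B => .imp (Formula.transM m A) (Formula.transM m B)

/-- The translation ^i : classical variables X_c are sent to ¬¬ i(X_c), and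
disjunctions are doubly negated. -/
def Formula.transI (f : ℕ → ℕ) : Formula → Formula
  | .var Kind.c n => ((Formula.var Kind.i (f n)).neg).neg
  | .var k n => .var k n
  | .bot => .bot
  | .and A B => .and (Formula.transI f A) (Formula.transI f B)
  | .or A B => (((Formula.transI f A).or (Formula.transI f B)).neg).neg
  | .imp A B => .imp (Formula.transI f A) (Formula.transI f B)

/-!
Substituting for a variable commutes with every rule of natural deduction, so a derivation of
`Γ ⊢ A` is turned rule by rule into one of `Γ[F/X] ⊢ A[F/X]`. The only side conditions are those
of the absurdity rules, and the restrictions on `F` are exactly what makes substitution preserve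
intuitionistic and classical formulas.
-/

namespace Formula

theorem onlyKinds_mono {p q : Kind → Prop} (hpq : ∀ k, p k → q k) :
    ∀ {A : Formula}, A.onlyKinds p → A.onlyKinds q
  | .var k _, h => hpq k h
  | .bot, _ => trivial
  | .and _ _, h | .or _ _, h | .imp _ _, h => ⟨onlyKinds_mono hpq h.1, onlyKinds_mono hpq h.2⟩

theorem IsClassical.isIntuitionistic {A : Formula} (hA : A.IsClassical) : A.IsIntuitionistic :=
  onlyKinds_mono (fun _ => Or.inr) hA

theorem onlyKinds_subst {p : Kind → Prop} {F : Formula} {k : Kind} {n : ℕ}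
    (hF : p k → F.onlyKinds p) : ∀ {A : Formula}, A.onlyKinds p → (subst F k n A).onlyKinds p
  | .var k' n', h => by
    by_cases hkn : k' = k ∧ n' = n
    · rw [subst, if_pos hkn]
      exact hF (hkn.1 ▸ h)
    · rwa [subst, if_neg hkn]
  | .bot, _ => trivial
  | .and _ _, h | .or _ _, h | .imp _ _, h => ⟨onlyKinds_subst hF h.1, onlyKinds_subst hF h.2⟩

end Formula

theorem Deriv.subst {R : Rules} (hR : R.fullOrE = true) {F : Formula} {k : Kind} {n : ℕ}
    (hI : k = Kind.i ∨ k = Kind.c → F.IsIntuitionistic) (hC : k = Kind.c → F.IsClassical)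
    {Γ : Set Formula} {A : Formula} (h : Deriv R Γ A) :
    Deriv R (Formula.subst F k n '' Γ) (Formula.subst F k n A) := by
  induction h with
  | ax _ => rw [Set.image_singleton]; exact .ax _
  | weak _ _ ih => rw [Set.image_insert_eq]; exact .weak _ ih
  | andI _ _ ih₁ ih₂ => rw [Set.image_union]; exact .andI ih₁ ih₂
  | andE₁ _ ih => exact .andE₁ ih
  | andE₂ _ ih => exact .andE₂ ih
  | orI₁ _ _ ih => exact .orI₁ _ ih
  | orI₂ _ _ ih => exact .orI₂ _ ih
  | orE _ _ _ _ ih₁ ih₂ ih₃ =>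
    rw [Set.image_insert_eq] at ih₂ ih₃
    rw [Set.image_union, Set.image_union]
    exact .orE (.inl hR) ih₁ ih₂ ih₃
  | impI _ ih => rw [Set.image_insert_eq] at ih; exact .impI ih
  | impE _ _ ih₁ ih₂ => rw [Set.image_union]; exact .impE ih₁ ih₂
  | botI hr hA _ ih => exact .botI hr (Formula.onlyKinds_subst hI hA) ih
  | botC hr hA _ ih => exact .botC hr (Formula.onlyKinds_subst hC hA) ih

end PML

/-- Substitution theorem: if Γ ⊢_pml A then substituting an arbitrary formula F for a
minimal variable, an intuitionistic formula Fᵢ for an intuitionistic variable, or a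
classical formula F_c for a classical variable preserves derivability. -/
theorem PML.subst_derivable (Γ : Set PML.Formula) (A F Fi Fc : PML.Formula)
    (nm ni nc : ℕ) (hFi : Fi.IsIntuitionistic) (hFc : Fc.IsClassical)
    (h : PML.DerivPML Γ A) :
    PML.DerivPML ((PML.Formula.subst F PML.Kind.m nm) '' Γ) (PML.Formula.subst F PML.Kind.m nm A) ∧
    PML.DerivPML ((PML.Formula.subst Fi PML.Kind.i ni) '' Γ) (PML.Formula.subst Fi PML.Kind.i ni A) ∧
    PML.DerivPML ((PML.Formula.subst Fc PML.Kind.c nc) '' Γ) (PML.Formula.subst Fc PML.Kind.c nc A) :=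
  ⟨PML.Deriv.subst (k := .m) rfl (by simp) nofun h,
    PML.Deriv.subst (k := .i) rfl (fun _ => hFi) nofun h,
    PML.Deriv.subst rfl (fun _ => hFc.isIntuitionistic) (fun _ => hFc) h⟩
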